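/- arXiv:2205.07643 — 3 statements merged into one kernel-verified Lean document; each statement's English description precedes it below -/
import Mathlib

section
/- Let a > 0 and K > 0 be real constants. Then the function ε ↦ sup over β ∈ [0, π/2] of ( −(a/(2ε²))·sin²β + K·(sin²β + sinβ·cosβ) ) tends to 0 as ε tends to 0 from the right. -/
open Real Filter

/-- As `ε → 0⁺`, the supremum over `β ∈ [0, π/2]` of
`-(a/(2ε²))·sin²β + K·(sin²β + sinβ·cosβ)` tends to `0`. -/
theorem stmt_2 (a K : ℝ) (ha : 0 < a) (hK : 0 < K) :
    Tendsto
      (fun ε : ℝ => sSup ((fun β : ℝ =>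
        -(a / (2 * ε ^ 2)) * Real.sin β ^ 2
          + K * (Real.sin β ^ 2 + Real.sin β * Real.cos β)) '' Set.Icc 0 (Real.pi / 2)))
      (nhdsWithin 0 (Set.Ioi 0)) (nhds 0) := by
  have hpi : 0 ≤ Real.pi / 2 := by positivity
  have key : ∀ ε : ℝ, 0 < ε → ∀ β ∈ Set.Icc 0 (Real.pi / 2),
      -(a / (2 * ε ^ 2)) * Real.sin β ^ 2
        + K * (Real.sin β ^ 2 + Real.sin β * Real.cos β) ≤ 2 * K ^ 2 * ε ^ 2 / a := by
    intro ε hε β hβ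
    obtain ⟨hβ0, hβ1⟩ := hβ
    have hs0 : 0 ≤ Real.sin β := Real.sin_nonneg_of_nonneg_of_le_pi hβ0
      (hβ1.trans (by linarith [Real.pi_pos]))
    have hs1 : Real.sin β ≤ 1 := Real.sin_le_one β
    have hc1 : Real.cos β ≤ 1 := Real.cos_le_one β
    have h1 : K * (Real.sin β ^ 2 + Real.sin β * Real.cos β) ≤ 2 * K * Real.sin β := by
      have e1 : Real.sin β ^ 2 ≤ Real.sin β := by nlinarith
      have e2 : Real.sin β * Real.cos β ≤ Real.sin β := mul_le_of_le_one_right hs0 hc1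
      nlinarith
    have h2 : -(a / (2 * ε ^ 2)) * Real.sin β ^ 2 + 2 * K * Real.sin β
        ≤ 2 * K ^ 2 * ε ^ 2 / a := by
      have hε2 : (0:ℝ) < ε ^ 2 := by positivity
      have heq : 2 * K ^ 2 * ε ^ 2 / a
          - (-(a / (2 * ε ^ 2)) * Real.sin β ^ 2 + 2 * K * Real.sin β)
          = (a * Real.sin β - 2 * K * ε ^ 2) ^ 2 / (2 * a * ε ^ 2) := by
        field_simp
        ring
      nlinarith [div_nonneg (sq_nonneg (a * Real.sin β - 2 * K * ε ^ 2))
        (by positivity : (0:ℝ) ≤ 2 * a * ε ^ 2)]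
    linarith
  have hne : ∀ ε : ℝ, ((fun β : ℝ =>
      -(a / (2 * ε ^ 2)) * Real.sin β ^ 2
        + K * (Real.sin β ^ 2 + Real.sin β * Real.cos β)) '' Set.Icc 0 (Real.pi / 2)).Nonempty :=
    fun ε => ⟨_, Set.mem_image_of_mem _ (Set.left_mem_Icc.mpr hpi)⟩
  have hbdd : ∀ ε : ℝ, 0 < ε → BddAbove ((fun β : ℝ =>
      -(a / (2 * ε ^ 2)) * Real.sin β ^ 2
        + K * (Real.sin β ^ 2 + Real.sin β * Real.cos β)) '' Set.Icc 0 (Real.pi / 2)) := by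
    intro ε hε
    exact ⟨2 * K ^ 2 * ε ^ 2 / a, by
      rintro x ⟨β, hβ, rfl⟩
      exact key ε hε β hβ⟩
  have htop : Tendsto (fun ε : ℝ => 2 * K ^ 2 * ε ^ 2 / a)
      (nhdsWithin 0 (Set.Ioi 0)) (nhds 0) := by
    have hc : Continuous fun ε : ℝ => 2 * K ^ 2 * ε ^ 2 / a := by
      exact (continuous_const.mul (continuous_pow 2)).div_const a
    have := (hc.tendsto 0).mono_left (nhdsWithin_le_nhds (s := Set.Ioi 0))
    simpa using this
  apply tendsto_of_tendsto_of_tendsto_of_le_of_le' tendsto_const_nhds htop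
  · filter_upwards [self_mem_nhdsWithin] with ε hε
    have h0 : (0:ℝ) ∈ (fun β : ℝ =>
        -(a / (2 * ε ^ 2)) * Real.sin β ^ 2
          + K * (Real.sin β ^ 2 + Real.sin β * Real.cos β)) '' Set.Icc 0 (Real.pi / 2) := by
      refine ⟨0, Set.left_mem_Icc.mpr hpi, by simp⟩
    exact le_csSup (hbdd ε hε) h0
  · filter_upwards [self_mem_nhdsWithin] with ε hε
    exact csSup_le (hne ε) (by rintro x ⟨β, hβ, rfl⟩; exact key ε hε β hβ)
end

section
/- Let T < 0, K > 0 and a > 0 be real constants. Then there exists ε₀ > 0 such that for every ε with 0 < ε < ε₀, every β ∈ [0, π/2], and all real numbers b₁, b_k with b₁² + b_k² = 1, one has (b₁² + b_k²·cos²β)·T + ( −(a/(2ε²))·sin²β + K·(sin²β + sinβ·cosβ) ) < 0. -/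
set_option maxHeartbeats 1000000


/-- For `T < 0`, `K > 0`, `a > 0`, there is `ε₀ > 0` such that for all `0 < ε < ε₀`,
all `β ∈ [0, π/2]` and all unit vectors `(b₁, b_k)` of `ℝ²`, one has
`(b₁² + b_k²cos²β)·T + (-(a/(2ε²))sin²β + K(sin²β + sinβcosβ)) < 0`. -/
theorem stmt_3 (T K a : ℝ) (hT : T < 0) (hK : 0 < K) (ha : 0 < a) :
    ∃ ε₀ : ℝ, 0 < ε₀ ∧ ∀ ε : ℝ, 0 < ε → ε < ε₀ →
      ∀ β ∈ Set.Icc (0 : ℝ) (Real.pi / 2), ∀ b₁ bk : ℝ, b₁ ^ 2 + bk ^ 2 = 1 →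
        (b₁ ^ 2 + bk ^ 2 * Real.cos β ^ 2) * T
          + (-(a / (2 * ε ^ 2)) * Real.sin β ^ 2
            + K * (Real.sin β ^ 2 + Real.sin β * Real.cos β)) < 0 := by
  set D : ℝ := -(2*T)*(K+1) + K^2 with hD
  have hT2 : (0:ℝ) < -(2*T) := by linarith
  have hDpos : 0 < D := by nlinarith [sq_nonneg K]
  have hquot : 0 < a * (-T) / D := div_pos (mul_pos ha (by linarith)) hDpos
  refine ⟨Real.sqrt (a * (-T) / D), Real.sqrt_pos.mpr hquot, ?_⟩
  intro ε hε hεlt β hβ b₁ bk hb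
  have hε2 : (0:ℝ) < ε ^ 2 := by positivity
  have hsq : ε ^ 2 < a * (-T) / D := by
    calc ε ^ 2 < Real.sqrt (a * (-T) / D) ^ 2 := by
          exact pow_lt_pow_left₀ hεlt hε.le two_ne_zero
      _ = a * (-T) / D := Real.sq_sqrt hquot.le
  have hA : D * ε ^ 2 < a * (-T) := by
    have := (lt_div_iff₀ hDpos).mp hsq
    linarith [this]
  set A : ℝ := a / (2 * ε ^ 2) with hAdef
  have hA2 : A * (2 * ε ^ 2) = a := div_mul_cancel₀ _ (by positivity)
  have hA4 : D < 2 * A * (-T) := by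
    have h : D * ε ^ 2 < (2 * A * (-T)) * ε ^ 2 := by nlinarith [hA, hA2]
    exact lt_of_mul_lt_mul_right h hε2.le
  have hs : 0 ≤ Real.sin β := Real.sin_nonneg_of_mem_Icc
    ⟨hβ.1, le_trans hβ.2 (by linarith [Real.pi_pos])⟩
  have hc : 0 ≤ Real.cos β := Real.cos_nonneg_of_mem_Icc
    ⟨le_trans (by linarith [Real.pi_pos]) hβ.1, hβ.2⟩
  have hpyth : Real.sin β ^ 2 + Real.cos β ^ 2 = 1 := Real.sin_sq_add_cos_sq β
  set S := Real.sin β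
  set C := Real.cos β
  -- step 1: the b₁,bk part is bounded by C²T
  have hge : C^2 ≤ b₁^2 + bk^2 * C^2 := by
    nlinarith [mul_nonneg (sq_nonneg b₁) (sq_nonneg S)]
  have h1 : (b₁^2 + bk^2 * C^2) * T ≤ C^2 * T :=
    mul_le_mul_of_nonpos_right hge hT.le
  -- step 2: bound for the cross term (AM-GM)
  have h3 : -(2*T) * (K*S*C) ≤ K^2*S^2 + T^2*C^2 := by
    nlinarith [sq_nonneg (K*S + T*C)]
  -- step 3: from hA4
  have h5 : (0:ℝ) ≤ (2*A*(-T) - D) * S^2 :=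
    mul_nonneg (by linarith) (sq_nonneg S)
  -- main scaled bound
  have h1' : -(2*T) * ((b₁^2 + bk^2 * C^2) * T) ≤ -(2*T) * (C^2 * T) :=
    mul_le_mul_of_nonneg_left h1 hT2.le
  have hmain : -(2*T) * ((b₁^2 + bk^2 * C^2) * T + (-A * S^2 + K*(S^2 + S*C)))
      ≤ -(T^2)*C^2 + 2*T*S^2 := by nlinarith [h1', h3, h5]
  have hfin : -(T^2)*C^2 + 2*T*S^2 < 0 := by
    rcases le_or_gt (1/2 : ℝ) (S^2) with h | h
    · nlinarith [mul_nonneg (sq_nonneg T) (sq_nonneg C), hT, h]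
    · have hc2 : (1/2:ℝ) ≤ C^2 := by nlinarith
      nlinarith [mul_nonneg (neg_nonneg.mpr hT.le) (sq_nonneg S), hT, hc2, sq_nonneg T]
  by_contra hcon
  push_neg at hcon
  have : (0:ℝ) ≤ -(2*T) * ((b₁^2 + bk^2 * C^2) * T + (-A * S^2 + K*(S^2 + S*C))) := by
    exact mul_nonneg hT2.le hcon
  linarith
end

section
/- Let E be a real inner product space of dimension n + 1 with n ≥ 2, and let e₁ and ν be two orthonormal vectors in E; let S = ν^⊥ be the hyperplane orthogonal to ν. Let P be an n-dimensional subspace of E that is not contained in S. Then there exist orthonormal vectors e₂, …, e_n spanning the orthogonal complement of span{e₁, ν}, an index k ∈ {2, …, n}, unit vectors v₀, v₁ ∈ span{e₁, e_k} with ⟨v₀, v₁⟩ = 0, and an angle β ∈ (0, π/2], such that the family consisting of v₁, the vectors e_i for 2 ≤ i ≤ n with i ≠ k, and v_n := cosβ·v₀ + sinβ·ν is an orthonormal basis of P. -/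
/-!
Let `u` be a unit normal of `P`, signed so that `⟪u, ν⟫ ≤ 0`. As `P ⊄ ν^⊥`, `u = a w + b ν` with
`w ⊥ ν` a unit vector and `a > 0`. Write `w = c e₁ + d e₂` with `e₂` a unit vector of
`span {e₁, ν}^⊥`, and complete `e₂` to an orthonormal basis `e₂, …, eₙ` of that space. Take `k = 2`,
`v₀ = w`, its rotation `v₁ = -d e₁ + c e₂` by a right angle in `span {e₁, e₂}`, and `β` with
`(cos β, sin β) = (-b, a)`. Then `v₁`, `cos β w + sin β ν = -b w + a ν` and `e₃, …, eₙ` are `n`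
orthonormal vectors orthogonal to `u`, hence an orthonormal basis of `P`.
-/

open Module Submodule Function
open scoped RealInnerProductSpace

section InnerProductSpace

variable {E : Type*} [NormedAddCommGroup E] [InnerProductSpace ℝ E]

section OrthonormalOn

variable {ι : Type*} {v : ι → E} {s : Set ι}

theorem orthonormal_domRestrict_iff [DecidableEq ι] :
    Orthonormal ℝ (s.domRestrict v) ↔
      ∀ i ∈ s, ∀ j ∈ s, ⟪v i, v j⟫ = if i = j then 1 else 0 := by
  simp [orthonormal_iff_ite, Subtype.ext_iff, Set.domRestrict]

theorem Orthonormal.domRestrict_insert_update [DecidableEq ι]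
    (hv : Orthonormal ℝ (s.domRestrict v)) {i₀ : ι} (hi₀ : i₀ ∉ s) {x : E} (hx : ‖x‖ = 1)
    (hxv : ∀ i ∈ s, ⟪x, v i⟫ = 0) :
    Orthonormal ℝ ((insert i₀ s).domRestrict (update v i₀ x)) := by
  have hne : ∀ i ∈ s, i ≠ i₀ := fun i hi h => hi₀ (h ▸ hi)
  rw [orthonormal_domRestrict_iff] at hv ⊢
  rintro i (rfl | hi) j (rfl | hj)
  · simp [hx]
  · simp [update_of_ne (hne j hj), hxv j hj, (hne j hj).symm]
  · simp [hne i hi, real_inner_comm, hxv i hi]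
  · simpa [hne i hi, hne j hj] using hv i hi j hj

theorem span_image_eq_of_orthonormal [FiniteDimensional ℝ E] {W : Submodule ℝ E} [Fintype s]
    (hv : Orthonormal ℝ (s.domRestrict v)) (hW : ∀ i ∈ s, v i ∈ W)
    (hcard : finrank ℝ W = Fintype.card s) : span ℝ (v '' s) = W := by
  refine eq_of_le_of_finrank_le (span_le.2 <| Set.image_subset_iff.2 hW) ?_
  rw [hcard, ← Set.range_domRestrict, finrank_span_eq_card hv.linearIndependent]

theorem exists_orthonormal_extension {W : Submodule ℝ E} [FiniteDimensional ℝ W] [Fintype s]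
    (hcard : finrank ℝ W = Fintype.card s) {i₀ : ι} (hi₀ : i₀ ∈ s) {y : E} (hyW : y ∈ W)
    (hy : ‖y‖ = 1) :
    ∃ e : ι → E, e i₀ = y ∧ Orthonormal ℝ (s.domRestrict e) ∧ ∀ i ∈ s, e i ∈ W := by
  classical
  have hy' : Orthonormal ℝ (({⟨i₀, hi₀⟩} : Set s).domRestrict fun _ => (⟨y, hyW⟩ : W)) := by
    rw [orthonormal_domRestrict_iff]
    simp [hy]
  obtain ⟨b, hb⟩ := hy'.exists_orthonormalBasis_extension_of_card_eq hcard
  refine ⟨fun i => if h : i ∈ s then b ⟨i, h⟩ else 0, by simp [hi₀, hb], ?_, fun i hi => ?_⟩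
  · convert b.orthonormal.comp_linearIsometry W.subtypeₗᵢ
    ext i
    simp [Set.domRestrict]
  · simp [hi]

end OrthonormalOn

theorem exists_unit_mem_eq_norm_smul {W : Submodule ℝ E} (hW : W ≠ ⊥) {x : E} (hx : x ∈ W) :
    ∃ y ∈ W, ‖y‖ = 1 ∧ x = ‖x‖ • y := by
  rcases eq_or_ne x 0 with rfl | hx0
  · obtain ⟨z, hzW, hz⟩ := W.ne_bot_iff.1 hW
    exact ⟨‖z‖⁻¹ • z, W.smul_mem _ hzW, norm_smul_inv_norm hz, by simp⟩
  · exact ⟨‖x‖⁻¹ • x, W.smul_mem _ hx, norm_smul_inv_norm hx0,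
      (smul_inv_smul₀ (norm_ne_zero_iff.2 hx0) x).symm⟩

section OrthonormalPair

variable {x y : E} (hx : ‖x‖ = 1) (hy : ‖y‖ = 1) (hxy : ⟪x, y⟫ = 0)
include hx hy hxy

theorem norm_smul_add_smul_sq (a b : ℝ) : ‖a • x + b • y‖ ^ 2 = a ^ 2 + b ^ 2 := by
  simp [norm_add_sq_real, norm_smul, real_inner_smul_left, real_inner_smul_right, hxy, hx, hy]

theorem norm_smul_add_smul_eq_one {a b : ℝ} (hab : a ^ 2 + b ^ 2 = 1) : ‖a • x + b • y‖ = 1 := by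
  rw [← pow_eq_one_iff_of_nonneg (norm_nonneg _) two_ne_zero, norm_smul_add_smul_sq hx hy hxy, hab]

theorem inner_smul_add_smul_neg_smul_add_smul (a b : ℝ) :
    ⟪a • x + b • y, -b • x + a • y⟫ = 0 := by
  simp only [inner_add_left, inner_add_right, real_inner_smul_left, real_inner_smul_right,
    real_inner_self_eq_norm_sq, hx, hy, hxy, real_inner_comm x y]
  ring

end OrthonormalPair

theorem exists_angle_mem_Ioc {a b : ℝ} (ha : 0 < a) (hb : b ≤ 0) (hab : a ^ 2 + b ^ 2 = 1) :
    ∃ β ∈ Set.Ioc 0 (Real.pi / 2), Real.cos β = -b ∧ Real.sin β = a := by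
  have hb1 : -1 < b := by nlinarith
  refine ⟨Real.arccos (-b),
    ⟨Real.arccos_pos.2 (by linarith), Real.arccos_le_pi_div_two.2 (by linarith)⟩,
    Real.cos_arccos (by linarith) (by linarith), ?_⟩
  rw [Real.sin_arccos, show 1 - (-b) ^ 2 = a ^ 2 by linarith, Real.sqrt_sq ha.le]

theorem exists_unit_normal_inner_nonpos [FiniteDimensional ℝ E] {P : Submodule ℝ E}
    (hP : finrank ℝ Pᗮ = 1) (ν : E) : ∃ u : E, ‖u‖ = 1 ∧ ⟪u, ν⟫ ≤ 0 ∧ P = (ℝ ∙ u)ᗮ := by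
  have hnormal : ∀ u ∈ Pᗮ, ‖u‖ = 1 → P = (ℝ ∙ u)ᗮ := fun u hu hu1 => by
    rw [← eq_span_singleton_of_mem_of_finrank_eq_one hP hu (norm_ne_zero_iff.1 (by simp [hu1])),
      orthogonal_orthogonal]
  obtain ⟨x, hx, hx0⟩ := Pᗮ.ne_bot_iff.1 fun h => by rw [h, finrank_bot] at hP; exact zero_ne_one hP
  set u₀ := ‖x‖⁻¹ • x
  have hu₀ : u₀ ∈ Pᗮ := Pᗮ.smul_mem _ hx
  have hu₀1 : ‖u₀‖ = 1 := norm_smul_inv_norm hx0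
  rcases le_total ⟪u₀, ν⟫ 0 with h | h
  · exact ⟨u₀, hu₀1, h, hnormal u₀ hu₀ hu₀1⟩
  · exact ⟨-u₀, by rwa [norm_neg], by rwa [inner_neg_left, neg_nonpos],
      hnormal _ (Pᗮ.neg_mem hu₀) (by rwa [norm_neg])⟩

theorem exists_normal_eq_smul_add_smul [FiniteDimensional ℝ E] {P : Submodule ℝ E}
    (hP : finrank ℝ Pᗮ = 1) {ν : E} (hν : ‖ν‖ = 1) (hPν : ¬P ≤ (ℝ ∙ ν)ᗮ) :
    ∃ (w : E) (a b : ℝ), ‖w‖ = 1 ∧ ⟪w, ν⟫ = 0 ∧ 0 < a ∧ b ≤ 0 ∧ a ^ 2 + b ^ 2 = 1 ∧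
      P = (ℝ ∙ (a • w + b • ν))ᗮ := by
  obtain ⟨u, hu, huν, rfl⟩ := exists_unit_normal_inner_nonpos hP ν
  set b := ⟪u, ν⟫
  set a := ‖u - b • ν‖
  have ha : a ≠ 0 := by
    intro ha
    have hub : u = b • ν := sub_eq_zero.1 (norm_eq_zero.1 ha)
    have hb : b ≠ 0 := by rintro hb; simp [hub, hb] at hu
    exact hPν (by rw [hub, span_singleton_smul_eq (IsUnit.mk0 b hb)])
  have hw : ‖a⁻¹ • (u - b • ν)‖ = 1 := norm_smul_inv_norm (norm_ne_zero_iff.1 ha)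
  have hwν : ⟪a⁻¹ • (u - b • ν), ν⟫ = 0 := by
    simp [inner_sub_left, real_inner_smul_left, hν, b]
  have hu_eq : u = a • a⁻¹ • (u - b • ν) + b • ν := by
    rw [smul_inv_smul₀ ha, sub_add_cancel]
  refine ⟨_, a, b, hw, hwν, lt_of_le_of_ne (norm_nonneg _) (Ne.symm ha), huν, ?_, by rw [← hu_eq]⟩
  rw [← norm_smul_add_smul_sq hw hν hwν, ← hu_eq, hu, one_pow]

theorem mem_orthogonal_span_pair_iff {x y z : E} :
    z ∈ (span ℝ {x, y})ᗮ ↔ ⟪x, z⟫ = 0 ∧ ⟪y, z⟫ = 0 := by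
  rw [span_insert, ← inf_orthogonal, mem_inf, mem_orthogonal_singleton_iff_inner_right,
    mem_orthogonal_singleton_iff_inner_right]

theorem finrank_orthogonal_span_pair [FiniteDimensional ℝ E] {x y : E} (hx : ‖x‖ = 1)
    (hy : ‖y‖ = 1) (hxy : ⟪x, y⟫ = 0) : finrank ℝ (span ℝ {x, y})ᗮ + 2 = finrank ℝ E := by
  have hon : Orthonormal ℝ ![x, y] := by
    rw [orthonormal_iff_ite]
    simp [Fin.forall_fin_two, hx, hy, hxy, real_inner_comm x y]
  have hrange : ({x, y} : Set E) = Set.range ![x, y] := by simp [Matrix.range_cons, Set.pair_comm]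
  rw [← (span ℝ {x, y}).finrank_add_finrank_orthogonal, hrange,
    finrank_span_eq_card hon.linearIndependent, Fintype.card_fin, add_comm]

theorem exists_adapted_frame [FiniteDimensional ℝ E] {ι : Type*} {s : Set ι} [Fintype s]
    {i₀ : ι} (hi₀ : i₀ ∈ s) (hdim : finrank ℝ E = Fintype.card s + 2) {e₁ ν w : E}
    (he₁ : ‖e₁‖ = 1) (hν : ‖ν‖ = 1) (he₁ν : ⟪e₁, ν⟫ = 0) (hw : ‖w‖ = 1) (hwν : ⟪w, ν⟫ = 0) :
    ∃ (e : ι → E) (c d : ℝ), Orthonormal ℝ (s.domRestrict e) ∧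
      span ℝ (e '' s) = (span ℝ {e₁, ν})ᗮ ∧ c ^ 2 + d ^ 2 = 1 ∧ w = c • e₁ + d • e i₀ := by
  have hK : finrank ℝ (span ℝ {e₁, ν})ᗮ = Fintype.card s := by
    have := finrank_orthogonal_span_pair he₁ hν he₁ν
    omega
  set c := ⟪e₁, w⟫
  have hw₂ : w - c • e₁ ∈ (span ℝ {e₁, ν})ᗮ := by
    rw [mem_orthogonal_span_pair_iff, inner_sub_right, inner_sub_right, real_inner_smul_right,
      real_inner_smul_right, real_inner_comm w ν, real_inner_comm e₁ ν, hwν, he₁ν,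
      real_inner_self_eq_norm_sq, he₁]
    constructor <;> ring
  have hK0 : (span ℝ {e₁, ν})ᗮ ≠ ⊥ := fun h => by
    rw [h, finrank_bot] at hK
    exact (Fintype.card_pos_iff.2 ⟨⟨i₀, hi₀⟩⟩).ne hK
  obtain ⟨e₂, he₂K, he₂, hw_eq⟩ := exists_unit_mem_eq_norm_smul hK0 hw₂
  obtain ⟨e, rfl, he, heK⟩ := exists_orthonormal_extension hK hi₀ he₂K he₂
  have hw_eq' : w = c • e₁ + ‖w - c • e₁‖ • e i₀ := by rw [← hw_eq, add_sub_cancel]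
  refine ⟨e, c, _, he, span_image_eq_of_orthonormal he heK hK, ?_, hw_eq'⟩
  rw [← norm_smul_add_smul_sq he₁ he₂ (mem_orthogonal_span_pair_iff.1 he₂K).1, ← hw_eq', hw,
    one_pow]

def rotatedFrame (e : ℕ → E) (x y : E) : ℕ → E :=
  update (update e 2 y) 1 x

section RotatedFrame

variable {n : ℕ} {e : ℕ → E} {x y : E}

theorem orthonormal_rotatedFrame (hn : 2 ≤ n) (he : Orthonormal ℝ ((Set.Icc 2 n).domRestrict e))
    (hx : ‖x‖ = 1) (hy : ‖y‖ = 1) (hxy : ⟪x, y⟫ = 0) (hxe : ∀ i ∈ Set.Icc 3 n, ⟪x, e i⟫ = 0)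
    (hye : ∀ i ∈ Set.Icc 3 n, ⟪y, e i⟫ = 0) :
    Orthonormal ℝ ((Set.Icc 1 n).domRestrict (rotatedFrame e x y)) := by
  have hsub : Set.Icc 3 n ⊆ Set.Icc 2 n := Set.Icc_subset_Icc_left (by norm_num)
  have hon₂ := (he.comp _ (Set.inclusion_injective hsub)).domRestrict_insert_update (i₀ := 2)
    (by simp) hy hye
  rw [show insert 2 (Set.Icc 3 n) = Set.Icc 2 n from Set.insert_Icc_add_one_left_eq_Icc hn]
    at hon₂
  have hon₁ := hon₂.domRestrict_insert_update (i₀ := 1) (by simp) hx fun i hi => by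
    rcases eq_or_ne i 2 with rfl | hi2
    · simpa using hxy
    · simpa [hi2] using hxe i ⟨by have := hi.1; omega, hi.2⟩
  rwa [show insert 1 (Set.Icc 2 n) = Set.Icc 1 n from
    Set.insert_Icc_add_one_left_eq_Icc (by omega)] at hon₁

theorem rotatedFrame_mem {W : Submodule ℝ E} (hx : x ∈ W) (hy : y ∈ W)
    (he : ∀ i ∈ Set.Icc 3 n, e i ∈ W) : ∀ i ∈ Set.Icc 1 n, rotatedFrame e x y i ∈ W := by
  intro i hi
  rcases eq_or_ne i 1 with rfl | hi1
  · simpa [rotatedFrame] using hx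
  rcases eq_or_ne i 2 with rfl | hi2
  · simpa [rotatedFrame] using hy
  · simpa [rotatedFrame, hi1, hi2] using he i ⟨by have := hi.1; omega, hi.2⟩

end RotatedFrame

theorem inner_eq_zero_of_mem_Icc_three {n : ℕ} {e₁ ν : E} {e : ℕ → E}
    (he : Orthonormal ℝ ((Set.Icc 2 n).domRestrict e))
    (heK : ∀ i ∈ Set.Icc 2 n, e i ∈ (span ℝ {e₁, ν})ᗮ) {i : ℕ} (hi : i ∈ Set.Icc 3 n) :
    ⟪e₁, e i⟫ = 0 ∧ ⟪e 2, e i⟫ = 0 ∧ ⟪ν, e i⟫ = 0 := by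
  have h2 : 2 ∈ Set.Icc 2 n := ⟨le_rfl, by have := hi.1; have := hi.2; omega⟩
  have hi2 : i ∈ Set.Icc 2 n := ⟨by have := hi.1; omega, hi.2⟩
  obtain ⟨he₁i, hνi⟩ := mem_orthogonal_span_pair_iff.1 (heK i hi2)
  refine ⟨he₁i, ?_, hνi⟩
  simpa [show 2 ≠ i by have := hi.1; omega] using orthonormal_domRestrict_iff.1 he 2 h2 i hi2

theorem rotatedFrame_orthonormal_and_mem {n : ℕ} (hn : 2 ≤ n) {e₁ ν w : E} {e : ℕ → E}
    {a b c d : ℝ} (he₁ : ‖e₁‖ = 1) (hν : ‖ν‖ = 1) (he₁ν : ⟪e₁, ν⟫ = 0)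
    (he : Orthonormal ℝ ((Set.Icc 2 n).domRestrict e))
    (heK : ∀ i ∈ Set.Icc 2 n, e i ∈ (span ℝ {e₁, ν})ᗮ) (hcd : c ^ 2 + d ^ 2 = 1)
    (hw : w = c • e₁ + d • e 2) (hab : a ^ 2 + b ^ 2 = 1) :
    let g := rotatedFrame e (-d • e₁ + c • e 2) (-b • w + a • ν)
    Orthonormal ℝ ((Set.Icc 1 n).domRestrict g) ∧
      ∀ i ∈ Set.Icc 1 n, g i ∈ (ℝ ∙ (a • w + b • ν))ᗮ := by
  set x := -d • e₁ + c • e 2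
  set y := -b • w + a • ν
  have h2 : 2 ∈ Set.Icc 2 n := Set.left_mem_Icc.2 hn
  have he2 : ‖e 2‖ = 1 := he.1 ⟨2, h2⟩
  obtain ⟨he₁2, hν2⟩ := mem_orthogonal_span_pair_iff.1 (heK 2 h2)
  have hfar := fun i (hi : i ∈ Set.Icc 3 n) => inner_eq_zero_of_mem_Icc_three he heK hi
  have hw1 : ‖w‖ = 1 := hw ▸ norm_smul_add_smul_eq_one he₁ he2 he₁2 hcd
  have hwν : ⟪w, ν⟫ = 0 := by
    simp [hw, inner_add_left, real_inner_smul_left, he₁ν, real_inner_comm ν (e 2), hν2]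
  have hwx : ⟪w, x⟫ = 0 := hw ▸ inner_smul_add_smul_neg_smul_add_smul he₁ he2 he₁2 c d
  have hνx : ⟪ν, x⟫ = 0 := by
    simp [x, inner_add_right, real_inner_smul_right, real_inner_comm e₁ ν, he₁ν, hν2]
  have hwe : ∀ i ∈ Set.Icc 3 n, ⟪w, e i⟫ = 0 := fun i hi => by
    simp [hw, inner_add_left, real_inner_smul_left, hfar i hi]
  have hye : ∀ i ∈ Set.Icc 3 n, ⟪y, e i⟫ = 0 := fun i hi => by
    simp [y, inner_add_left, real_inner_smul_left, hwe i hi, hfar i hi]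
  refine ⟨orthonormal_rotatedFrame hn he (norm_smul_add_smul_eq_one he₁ he2 he₁2 (by linarith))
    (norm_smul_add_smul_eq_one hw1 hν hwν (by linarith)) ?_ ?_ hye, rotatedFrame_mem ?_ ?_ ?_⟩
  · simp [y, inner_add_right, real_inner_smul_right, real_inner_comm w x, real_inner_comm ν x,
      hwx, hνx]
  · intro i hi
    simp [x, inner_add_left, real_inner_smul_left, hfar i hi]
  · rw [mem_orthogonal_singleton_iff_inner_right]
    simp only [x, inner_add_left, real_inner_smul_left, hwx, hνx]
    ring
  · rw [mem_orthogonal_singleton_iff_inner_right]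
    exact inner_smul_add_smul_neg_smul_add_smul hw1 hν hwν a b
  · intro i hi
    rw [mem_orthogonal_singleton_iff_inner_right]
    simp [inner_add_left, real_inner_smul_left, hwe i hi, hfar i hi]

end InnerProductSpace

/-- Any `n`-dimensional subspace `P` of an `(n+1)`-dimensional inner product space,
not contained in the hyperplane `S = ν^⊥`, admits an orthonormal basis of the form
`v₁, e_i (2 ≤ i ≤ n, i ≠ k), v_n = cosβ·v₀ + sinβ·ν`. -/
theorem stmt_6 {E : Type*} [NormedAddCommGroup E] [InnerProductSpace ℝ E]
    [FiniteDimensional ℝ E]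
    (n : ℕ) (hn : 2 ≤ n) (hdim : Module.finrank ℝ E = n + 1)
    (e₁ ν : E) (he₁ : ‖e₁‖ = 1) (hν : ‖ν‖ = 1) (he₁ν : (inner ℝ e₁ ν : ℝ) = 0)
    (S : Submodule ℝ E) (hS : S = (ℝ ∙ ν)ᗮ)
    (P : Submodule ℝ E) (hP : Module.finrank ℝ P = n) (hPS : ¬ P ≤ S) :
    ∃ (e : ℕ → E) (k : ℕ) (v₀ v₁ : E) (β : ℝ),
      (∀ i ∈ Finset.Icc 2 n, ∀ j ∈ Finset.Icc 2 n,
        (inner ℝ (e i) (e j) : ℝ) = if i = j then 1 else 0) ∧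
      Submodule.span ℝ (e '' Set.Icc 2 n) = (Submodule.span ℝ {e₁, ν})ᗮ ∧
      k ∈ Finset.Icc 2 n ∧
      v₀ ∈ Submodule.span ℝ ({e₁, e k} : Set E) ∧
      v₁ ∈ Submodule.span ℝ ({e₁, e k} : Set E) ∧
      ‖v₀‖ = 1 ∧ ‖v₁‖ = 1 ∧ (inner ℝ v₀ v₁ : ℝ) = 0 ∧
      β ∈ Set.Ioc 0 (Real.pi / 2) ∧
      (∀ g : ℕ → E,
        (g = fun i => if i = 1 then v₁ else if i = k then
          Real.cos β • v₀ + Real.sin β • ν else e i) →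
        (∀ i ∈ Finset.Icc 1 n, ∀ j ∈ Finset.Icc 1 n,
          (inner ℝ (g i) (g j) : ℝ) = if i = j then 1 else 0) ∧
        Submodule.span ℝ (g '' Set.Icc 1 n) = P) := by
  subst hS
  have hPo : finrank ℝ Pᗮ = 1 := by
    have := P.finrank_add_finrank_orthogonal
    omega
  obtain ⟨w, a, b, hw, hwν, ha, hb, hab, rfl⟩ := exists_normal_eq_smul_add_smul hPo hν hPS
  obtain ⟨e, c, d, he, he_span, hcd, hw_eq⟩ := exists_adapted_frame (s := Set.Icc 2 n)
    (Set.left_mem_Icc.2 hn) (by simp; omega) he₁ hν he₁ν hw hwν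
  have heK : ∀ i ∈ Set.Icc 2 n, e i ∈ (span ℝ {e₁, ν})ᗮ := fun i hi =>
    he_span ▸ subset_span ⟨i, hi, rfl⟩
  obtain ⟨β, hβ, hcos, hsin⟩ := exists_angle_mem_Ioc ha hb hab
  obtain ⟨hg, hgP⟩ := rotatedFrame_orthonormal_and_mem hn he₁ hν he₁ν he heK hcd hw_eq hab
  have he2 : ‖e 2‖ = 1 := he.1 ⟨2, Set.left_mem_Icc.2 hn⟩
  have he₁2 : ⟪e₁, e 2⟫ = 0 := (mem_orthogonal_span_pair_iff.1 (heK 2 (Set.left_mem_Icc.2 hn))).1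
  refine ⟨e, 2, w, -d • e₁ + c • e 2, β, by simpa using orthonormal_domRestrict_iff.1 he,
    he_span, by simpa using hn, mem_span_pair.2 ⟨c, d, hw_eq.symm⟩, mem_span_pair.2 ⟨_, _, rfl⟩,
    hw, norm_smul_add_smul_eq_one he₁ he2 he₁2 (by linarith),
    hw_eq ▸ inner_smul_add_smul_neg_smul_add_smul he₁ he2 he₁2 c d, hβ, ?_⟩
  rintro g rfl
  have hg_eq : (fun i => if i = 1 then -d • e₁ + c • e 2 else if i = 2 then
      Real.cos β • w + Real.sin β • ν else e i) =
      rotatedFrame e (-d • e₁ + c • e 2) (-b • w + a • ν) := by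
    funext i
    simp only [rotatedFrame, update_apply, hcos, hsin]
  rw [hg_eq]
  exact ⟨by simpa using orthonormal_domRestrict_iff.1 hg,
    span_image_eq_of_orthonormal hg hgP (by simp [hP])⟩
end
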